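/- arXiv:1605.07046 — 6 statements merged into one kernel-verified Lean document; each statement's English description precedes it below -/
import Mathlib

section
/- If every window w_r in the family W has supporting length l(w_r) ≤ N/2, then there exists a nonzero signal x ∈ ℂ^N that cannot be determined up to a global phase from the magnitude measurements |X_{w_r}(Lm,k)| of its multiple-window STFT. In fact, the signal x_0 with x_0(0) = x_0(⌊N/2⌋) = 1 and all other entries zero is not phase retrievable. -/
/-- Multiple-window short-time Fourier transform. -/
noncomputable def stft {N : ℕ} [NeZero N] (L : ℕ) (x w : ZMod N → ℂ) (m k : ℕ) : ℂ :=
  (N : ℂ)⁻¹ * ∑ n : ZMod N, x n * w (((L * m : ℕ) : ZMod N) - n) *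
    Complex.exp (-(2 * Real.pi * Complex.I * (k : ℂ) * (n.val : ℂ)) / (N : ℂ))

/-- If every window has supporting length at most `N/2` (i.e. its support is contained in
some interval of `N/2` consecutive residues mod `N`), then the signal `x₀` with
`x₀(0) = x₀(⌊N/2⌋) = 1` and all other entries zero cannot be determined up to a global
phase from the magnitudes of its multiple-window STFT. -/
theorem stmt1 (N L R : ℕ) [NeZero N] (hN : 2 ≤ N) (hL : 0 < L) (hR : 0 < R) (hdvd : L ∣ N)
    (w : Fin R → ZMod N → ℂ)
    (hsupp : ∀ r : Fin R, ∃ (a : ZMod N) (l : ℕ), l ≤ N / 2 ∧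
      ∀ n : ZMod N, (∀ j < l, n ≠ a + (j : ZMod N)) → w r n = 0) :
    ¬ (∀ y : ZMod N → ℂ,
      (∀ r : Fin R, ∀ m < N / L, ∀ k < N,
        ‖stft L y (w r) m k‖ =
          ‖stft L (fun n => if n = 0 ∨ n = ((N / 2 : ℕ) : ZMod N) then 1 else 0) (w r) m k‖) →
      ∃ θ : ℝ, y = fun n =>
        Complex.exp (Complex.I * θ) *
          (if n = 0 ∨ n = ((N / 2 : ℕ) : ZMod N) then 1 else 0)) := by
  intro H
  set c : ZMod N := ((N / 2 : ℕ) : ZMod N) with hc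
  have hN2pos : 0 < N / 2 := Nat.div_pos hN two_pos
  have hN2lt : N / 2 < N := Nat.div_lt_self (by omega) one_lt_two
  have hc0 : c ≠ 0 := by
    rw [hc, Ne, ZMod.natCast_eq_zero_iff]
    intro hdv
    exact absurd (Nat.le_of_dvd hN2pos hdv) (not_le.mpr hN2lt)
  -- key: at most one of `w r t`, `w r (t - c)` is nonzero
  have key : ∀ r : Fin R, ∀ t : ZMod N, w r t = 0 ∨ w r (t - c) = 0 := by
    intro r t
    obtain ⟨a, l, hl, hw⟩ := hsupp r
    by_contra h
    push_neg at h
    obtain ⟨h1, h2⟩ := h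
    have e1 : ∃ j, j < l ∧ t = a + (j : ZMod N) := by
      by_contra he; push_neg at he
      exact h1 (hw t he)
    have e2 : ∃ j, j < l ∧ t - c = a + (j : ZMod N) := by
      by_contra he; push_neg at he
      exact h2 (hw (t - c) he)
    obtain ⟨j1, hj1, ht1⟩ := e1
    obtain ⟨j2, hj2, ht2⟩ := e2
    have hcast : ((j1 : ℕ) : ZMod N) = ((j2 + N / 2 : ℕ) : ZMod N) := by
      push_cast
      rw [← hc]
      linear_combination ht2 - ht1
    have hmod : j1 % N = (j2 + N / 2) % N := (ZMod.natCast_eq_natCast_iff _ _ _).mp hcast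
    have hj1N : j1 < N := by omega
    have hj2N : j2 + N / 2 < N := by omega
    rw [Nat.mod_eq_of_lt hj1N, Nat.mod_eq_of_lt hj2N] at hmod
    omega
  -- the counterexample signal
  set y : ZMod N → ℂ := fun n => if n = 0 then 1 else if n = c then -1 else 0 with hy
  obtain ⟨θ, hθ⟩ := H y (by
    intro r m hm k hk
    simp only [stft, ← hc]
    rcases key r (((L * m : ℕ) : ZMod N)) with h | h
    · -- w r t = 0 : sums are negatives of each other
      rw [Nat.cast_mul] at h
      have hsum : (∑ n : ZMod N, y n * w r (((L * m : ℕ) : ZMod N) - n) *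
            Complex.exp (-(2 * Real.pi * Complex.I * (k : ℂ) * (n.val : ℂ)) / (N : ℂ)))
          = - ∑ n : ZMod N,
            (if n = 0 ∨ n = c then (1 : ℂ) else 0) * w r (((L * m : ℕ) : ZMod N) - n) *
            Complex.exp (-(2 * Real.pi * Complex.I * (k : ℂ) * (n.val : ℂ)) / (N : ℂ)) := by
        rw [← Finset.sum_neg_distrib]
        refine Finset.sum_congr rfl fun n _ => ?_
        by_cases h0 : n = 0
        · subst h0
          simp only [sub_zero] at *
          simp [hy, h]
        · by_cases hcn : n = c
          · subst hcn
            simp [hy, h0, hc0]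
          · simp [hy, h0, hcn]
      rw [hsum, mul_neg, norm_neg]
    · -- w r (t - c) = 0 : sums are equal
      rw [Nat.cast_mul] at h
      have hsum : (∑ n : ZMod N, y n * w r (((L * m : ℕ) : ZMod N) - n) *
            Complex.exp (-(2 * Real.pi * Complex.I * (k : ℂ) * (n.val : ℂ)) / (N : ℂ)))
          = ∑ n : ZMod N,
            (if n = 0 ∨ n = c then (1 : ℂ) else 0) * w r (((L * m : ℕ) : ZMod N) - n) *
            Complex.exp (-(2 * Real.pi * Complex.I * (k : ℂ) * (n.val : ℂ)) / (N : ℂ)) := by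
        refine Finset.sum_congr rfl fun n _ => ?_
        by_cases h0 : n = 0
        · subst h0; simp [hy]
        · by_cases hcn : n = c
          · subst hcn
            simp [hy, h0, h]
          · simp [hy, h0, hcn]
      rw [hsum])
  have h0 : y 0 = Complex.exp (Complex.I * θ) := by
    have := congrFun hθ 0
    simpa [← hc] using this
  have hcv : y c = Complex.exp (Complex.I * θ) := by
    have := congrFun hθ c
    simpa [← hc, hy, hc0] using this
  rw [hy] at h0 hcv
  simp only [if_pos rfl] at h0
  simp only [hc0, if_neg, if_pos rfl] at hcv
  rw [← h0] at hcv
  norm_num at hcv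
end

section
/- Suppose the graph G(x, W, L) is disconnected, witnessed by a nonempty proper subset V_1 of V(x) with no edges between V_1 and V(x)∖V_1. Then for every real θ, the signal x_θ = e^{−2πiθ} x_{V_1} + (x − x_{V_1}) has exactly the same STFT magnitude measurements |X_{w_r}(Lm,k)| as x, for all r, m, k. -/
section

variable {N : ℕ} [NeZero N] {L : ℕ} {w : ZMod N → ℂ} {m : ℕ}

theorem stft_congr {x y : ZMod N → ℂ}
    (h : ∀ n, w (((L * m : ℕ) : ZMod N) - n) ≠ 0 → y n = x n) (k : ℕ) :
    stft L y w m k = stft L x w m k := by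
  unfold stft
  congr 1
  refine Finset.sum_congr rfl fun n _ => ?_
  by_cases hw : w (((L * m : ℕ) : ZMod N) - n) = 0
  · simp only [hw, mul_zero, zero_mul]
  · rw [h n hw]

theorem stft_const_mul (c : ℂ) (x : ZMod N → ℂ) (k : ℕ) :
    stft L (fun n => c * x n) w m k = c * stft L x w m k := by
  simp only [stft, Finset.mul_sum]
  ring_nf

theorem norm_stft_eq_of_eq_mul_on_window {x y : ZMod N → ℂ} {c : ℂ} (hc : ‖c‖ = 1)
    (h : ∀ n, w (((L * m : ℕ) : ZMod N) - n) ≠ 0 → y n = c * x n) (k : ℕ) :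
    ‖stft L y w m k‖ = ‖stft L x w m k‖ := by
  rw [stft_congr h, stft_const_mul, norm_mul, hc, one_mul]

end

theorem norm_exp_neg_two_pi_I_mul (θ : ℝ) :
    ‖Complex.exp (-(2 * Real.pi * Complex.I * (θ : ℂ)))‖ = 1 := by
  rw [show -(2 * Real.pi * Complex.I * (θ : ℂ)) = ((-(2 * Real.pi * θ) : ℝ) : ℂ) * Complex.I by
    push_cast; ring]
  exact Complex.norm_exp_ofReal_mul_I _

theorem stmt2_general (N L R : ℕ) [NeZero N]
    (w : Fin R → ZMod N → ℂ) (x : ZMod N → ℂ) (V1 : Finset (ZMod N))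
    (hnoedge : ∀ n ∈ V1, ∀ n' : ZMod N, x n' ≠ 0 → n' ∉ V1 →
      ∀ r : Fin R, ∀ m < N / L,
        w r (((L * m : ℕ) : ZMod N) - n') * w r (((L * m : ℕ) : ZMod N) - n) = 0)
    (θ : ℝ) :
    ∀ r : Fin R, ∀ m < N / L, ∀ k < N,
      ‖stft L (fun n => if n ∈ V1 then
          Complex.exp (-(2 * Real.pi * Complex.I * (θ : ℂ))) * x n else x n) (w r) m k‖ =
        ‖stft L x (w r) m k‖ := by
  intro r m hm k _
  by_cases hmeet : ∃ n ∈ V1, w r (((L * m : ℕ) : ZMod N) - n) ≠ 0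
  · obtain ⟨n₀, hn₀, hw₀⟩ := hmeet
    refine norm_stft_eq_of_eq_mul_on_window (norm_exp_neg_two_pi_I_mul θ) (fun n hw => ?_) k
    by_cases hn : n ∈ V1
    · rw [if_pos hn]
    · have hxn : x n = 0 := by
        by_contra hxn
        exact hw ((mul_eq_zero.mp (hnoedge n₀ hn₀ n hxn hn r m hm)).resolve_right hw₀)
      simp [hn, hxn]
  · simp only [not_exists, not_and, not_not] at hmeet
    refine norm_stft_eq_of_eq_mul_on_window (c := 1) norm_one (fun n hw => ?_) k
    rw [if_neg fun hn => hw (hmeet n hn), one_mul]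

/-- If the graph `G(x, W, L)` is disconnected, witnessed by a nonempty proper subset `V₁`
of the support of `x` with no edges between `V₁` and its complement in the support, then
for every real `θ` the signal `x_θ = e^{-2πiθ} x_{V₁} + (x - x_{V₁})` has exactly the same
STFT magnitude measurements as `x`. -/
theorem stmt2 (N L R : ℕ) [NeZero N] (hL : 0 < L) (hdvd : L ∣ N)
    (w : Fin R → ZMod N → ℂ) (x : ZMod N → ℂ) (V1 : Finset (ZMod N))
    (hV1sub : ∀ n ∈ V1, x n ≠ 0) (hV1ne : V1.Nonempty)
    (hV1prop : ∃ n : ZMod N, x n ≠ 0 ∧ n ∉ V1)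
    (hnoedge : ∀ n ∈ V1, ∀ n' : ZMod N, x n' ≠ 0 → n' ∉ V1 →
      ∀ r : Fin R, ∀ m < N / L,
        w r (((L * m : ℕ) : ZMod N) - n') * w r (((L * m : ℕ) : ZMod N) - n) = 0)
    (θ : ℝ) :
    ∀ r : Fin R, ∀ m < N / L, ∀ k < N,
      ‖stft L (fun n => if n ∈ V1 then
          Complex.exp (-(2 * Real.pi * Complex.I * (θ : ℂ))) * x n else x n) (w r) m k‖ =
        ‖stft L x (w r) m k‖ :=
  stmt2_general N L R w x V1 hnoedge θ
end

section
/- For each window w_r and each 0 ≤ m' ≤ N/L−1, Z(w_r, m') = Σ_{k=0}^{N−1} α(k) β_r(k) e^{2πi m' k L / N}, where α(k) = (1/N) Σ_{n=0}^{N−1} |x(n)|² e^{−2πikn/N} and β_r(k) = (1/N) Σ_{n=0}^{N−1} |w_r(n)|² e^{−2πikn/N}. -/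
/-- DFT of the squared magnitudes of a vector: `(1/N) ∑_n |u(n)|² e^{-2πikn/N}`. -/
noncomputable def dftSq {N : ℕ} [NeZero N] (u : ZMod N → ℂ) (k : ℕ) : ℂ :=
  (N : ℂ)⁻¹ * ∑ n : ZMod N, (‖u n‖ ^ 2 : ℝ) *
    Complex.exp (-(2 * Real.pi * Complex.I * (k : ℂ) * (n.val : ℂ)) / (N : ℂ))

/-!
For `c = L m'`, the STFT column `k ↦ X(Lm', k)` is `N⁻¹` times the DFT of `n ↦ x n * w (c - n)`,
so by Parseval the left side is `N⁻¹ ∑ₙ |x n|² |w (c - n)|²`. The right side is the inverse DFT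
at `c` of the product of the DFTs of `|x|²` and `|w|²`, which by the convolution theorem is the
same circular convolution evaluated at `c`. Both identities follow from the orthogonality of the
characters `k ↦ e^{2πi k b / N}` of `ZMod N`.
-/

open Complex Finset ZMod

namespace ZMod

variable {N : ℕ} [NeZero N]

lemma sum_range_natCast {M : Type*} [AddCommMonoid M] (f : ZMod N → M) :
    ∑ k ∈ range N, f k = ∑ k : ZMod N, f k :=
  sum_nbij' Nat.cast ZMod.val (fun _ _ ↦ mem_univ _) (fun a _ ↦ mem_range.2 a.val_lt)
    (fun _ hk ↦ val_cast_of_lt (mem_range.1 hk)) (fun a _ ↦ natCast_zmod_val a) (fun _ _ ↦ rfl)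

lemma sum_stdAddChar_mul (b : ZMod N) :
    ∑ k : ZMod N, stdAddChar (k * b) = if b = 0 then (N : ℂ) else 0 := by
  rw [AddChar.sum_mulShift b (isPrimitive_stdAddChar N), ZMod.card]
  split_ifs <;> simp

lemma conj_stdAddChar (a : ZMod N) : starRingEnd ℂ (stdAddChar a) = stdAddChar (-a) := by
  rw [AddChar.map_neg_eq_inv, stdAddChar_apply, ← Circle.coe_inv_eq_conj, Circle.coe_inv]

lemma conj_dft (f : ZMod N → ℂ) (k : ZMod N) :
    starRingEnd ℂ (𝓕 f k) = 𝓕 (fun j ↦ starRingEnd ℂ (f (-j))) k := by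
  simp only [dft_apply, map_sum, smul_eq_mul, map_mul, conj_stdAddChar]
  exact (Fintype.sum_equiv (Equiv.neg _) _ _ fun j ↦ by simp).symm

lemma sum_dft_mul_dft_mul_stdAddChar (f g : ZMod N → ℂ) (c : ZMod N) :
    ∑ k, 𝓕 f k * 𝓕 g k * stdAddChar (k * c) = N * ∑ n, f n * g (c - n) := by
  have h : ∀ k n p : ZMod N, stdAddChar (-(n * k)) * stdAddChar (-(p * k)) * stdAddChar (k * c)
      = stdAddChar (k * (c - n - p)) := fun k n p ↦ by
    rw [← AddChar.map_add_eq_mul, ← AddChar.map_add_eq_mul]; ring_nf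
  calc ∑ k, 𝓕 f k * 𝓕 g k * stdAddChar (k * c)
      = ∑ k, ∑ p, ∑ n, f n * g p * stdAddChar (k * (c - n - p)) := by
        simp only [dft_apply, smul_eq_mul, sum_mul, mul_sum, ← h]
        exact sum_congr rfl fun k _ ↦ sum_congr rfl fun p _ ↦ sum_congr rfl fun n _ ↦ by ring
    _ = ∑ n, ∑ p, f n * g p * ∑ k, stdAddChar (k * (c - n - p)) := by
        rw [sum_comm, sum_comm_cycle]
        simp only [mul_sum]
    _ = N * ∑ n, f n * g (c - n) := by
        simp [sum_stdAddChar_mul, sub_sub, sub_eq_zero, eq_comm (a := c), ← eq_sub_iff_add_eq',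
          mul_sum, mul_comm]

lemma sum_norm_dft_sq (f : ZMod N → ℂ) :
    ∑ k, (‖𝓕 f k‖ ^ 2 : ℂ) = N * ∑ n, (‖f n‖ ^ 2 : ℂ) := by
  simpa [← mul_conj', conj_dft] using
    sum_dft_mul_dft_mul_stdAddChar f (fun j ↦ starRingEnd ℂ (f (-j))) 0

lemma exp_neg_eq_stdAddChar (k : ℕ) (n : ZMod N) :
    exp (-(2 * Real.pi * I * (k : ℂ) * (n.val : ℂ)) / (N : ℂ)) =
      stdAddChar (-(n * (k : ZMod N))) := by
  have h := stdAddChar_coe (N := N) (-((n.val * k : ℕ) : ℤ))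
  push_cast [natCast_zmod_val] at h
  rw [h]
  ring_nf

lemma exp_eq_stdAddChar (k a : ℕ) :
    exp (2 * Real.pi * I * (a : ℂ) * (k : ℂ) / (N : ℂ)) =
      stdAddChar ((k : ZMod N) * (a : ZMod N)) := by
  have h := stdAddChar_coe (N := N) ((k * a : ℕ) : ℤ)
  push_cast at h
  rw [h]
  ring_nf

end ZMod

section

variable {N : ℕ} [NeZero N]

lemma stft_eq_dft (L : ℕ) (x w : ZMod N → ℂ) (m k : ℕ) :
    stft L x w m k = (N : ℂ)⁻¹ * 𝓕 (fun n ↦ x n * w ((L * m : ℕ) - n)) k := by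
  rw [stft, dft_apply]
  congr 1
  exact sum_congr rfl fun n _ ↦ by rw [exp_neg_eq_stdAddChar, smul_eq_mul, mul_comm]

lemma dftSq_eq_dft (u : ZMod N → ℂ) (k : ℕ) :
    dftSq u k = (N : ℂ)⁻¹ * 𝓕 (fun n ↦ (‖u n‖ ^ 2 : ℂ)) k := by
  rw [dftSq, dft_apply]
  congr 1
  exact sum_congr rfl fun n _ ↦ by rw [exp_neg_eq_stdAddChar, smul_eq_mul, mul_comm, ofReal_pow]

lemma sum_norm_stft_sq (L : ℕ) (x w : ZMod N → ℂ) (m : ℕ) :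
    ((∑ k ∈ range N, ‖stft L x w m k‖ ^ 2 : ℝ) : ℂ) =
      (N : ℂ)⁻¹ * ∑ n, (‖x n‖ ^ 2 : ℂ) * ‖w ((L * m : ℕ) - n)‖ ^ 2 := by
  calc _ = (N : ℂ)⁻¹ ^ 2 *
          ∑ k : ZMod N, (‖𝓕 (fun n ↦ x n * w ((L * m : ℕ) - n)) k‖ ^ 2 : ℂ) := by
        push_cast
        simp only [stft_eq_dft, norm_mul, ofReal_mul, mul_pow, mul_sum]
        rw [← sum_range_natCast]
        simp
    _ = _ := by
        rw [sum_norm_dft_sq]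
        field_simp
        simp [mul_pow]

lemma sum_dftSq_mul_dftSq_mul_exp (x w : ZMod N → ℂ) (a : ℕ) :
    ∑ k ∈ range N, dftSq x k * dftSq w k * exp (2 * Real.pi * I * (a : ℂ) * (k : ℂ) / (N : ℂ)) =
      (N : ℂ)⁻¹ * ∑ n, (‖x n‖ ^ 2 : ℂ) * ‖w (a - n)‖ ^ 2 := by
  calc _ = (N : ℂ)⁻¹ ^ 2 * ∑ k : ZMod N, 𝓕 (fun n ↦ (‖x n‖ ^ 2 : ℂ)) k *
          𝓕 (fun n ↦ (‖w n‖ ^ 2 : ℂ)) k * stdAddChar (k * (a : ZMod N)) := by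
        simp only [dftSq_eq_dft, exp_eq_stdAddChar, mul_sum]
        rw [← sum_range_natCast]
        exact sum_congr rfl fun k _ ↦ by ring
    _ = _ := by
        rw [sum_dft_mul_dft_mul_stdAddChar]
        field_simp

end

theorem stmt5_general (N L : ℕ) [NeZero N]
    (w x : ZMod N → ℂ) (m' : ℕ) :
    ((∑ k ∈ Finset.range N, ‖stft L x w m' k‖ ^ 2 : ℝ) : ℂ) =
      ∑ k ∈ Finset.range N, dftSq x k * dftSq w k *
        Complex.exp (2 * Real.pi * Complex.I * (m' : ℂ) * (k : ℂ) * (L : ℂ) / (N : ℂ)) := by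
  have hexp : ∀ k : ℕ, exp (2 * Real.pi * I * (m' : ℂ) * (k : ℂ) * (L : ℂ) / (N : ℂ)) =
      exp (2 * Real.pi * I * ((L * m' : ℕ) : ℂ) * (k : ℂ) / (N : ℂ)) := fun k ↦ by
    push_cast; ring_nf
  simp only [hexp, sum_norm_stft_sq, sum_dftSq_mul_dftSq_mul_exp]

/-- `Z(w, m') = ∑_{k} α(k) β(k) e^{2πi m' k L / N}` where `α`, `β` are the DFTs of
`|x|²` and `|w|²`. -/
theorem stmt5 (N L : ℕ) [NeZero N] (hL : 0 < L) (hdvd : L ∣ N)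
    (w x : ZMod N → ℂ) (m' : ℕ) (hm' : m' < N / L) :
    ((∑ k ∈ Finset.range N, ‖stft L x w m' k‖ ^ 2 : ℝ) : ℂ) =
      ∑ k ∈ Finset.range N, dftSq x k * dftSq w k *
        Complex.exp (2 * Real.pi * Complex.I * (m' : ℂ) * (k : ℂ) * (L : ℂ) / (N : ℂ)) :=
  stmt5_general N L w x m'
end

section
/- Let w be an N-periodic window with supporting interval [a(w), a(w)+l(w)−1] + Nℤ and supporting length l(w) ≤ N/2 with l(w) ≥ 2. Then w(n) · conj(w(n + l(w) − 1)) ≠ 0 if and only if n ∈ a(w) + Nℤ. -/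
/-- For an `N`-periodic window `w` supported exactly on `[a, a+l-1] + Nℤ` with
`2 ≤ l ≤ N/2`, one has `w(n) conj(w(n+l-1)) ≠ 0` iff `n ≡ a (mod N)`. -/
theorem stmt8 (N : ℕ) [NeZero N] (w : ZMod N → ℂ) (a : ZMod N) (l : ℕ)
    (hl2 : 2 ≤ l) (hlN : l ≤ N / 2)
    (ha : w a ≠ 0) (hb : w (a + ((l - 1 : ℕ) : ZMod N)) ≠ 0)
    (hsupp : ∀ n : ZMod N, (∀ j < l, n ≠ a + (j : ZMod N)) → w n = 0) :
    ∀ n : ZMod N,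
      w n * (starRingEnd ℂ) (w (n + ((l - 1 : ℕ) : ZMod N))) ≠ 0 ↔ n = a := by
  have hN : N ≠ 0 := NeZero.ne N
  intro n
  constructor
  · intro h
    have h1 : w n ≠ 0 := left_ne_zero_of_mul h
    have h2 : w (n + ((l - 1 : ℕ) : ZMod N)) ≠ 0 := by
      intro hz
      exact h (by simp [hz])
    obtain ⟨j, hj, hnj⟩ : ∃ j < l, n = a + (j : ZMod N) := by
      by_contra hc; push_neg at hc; exact h1 (hsupp n hc)
    obtain ⟨k, hk, hnk⟩ : ∃ k < l, n + ((l - 1 : ℕ) : ZMod N) = a + (k : ZMod N) := by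
      by_contra hc; push_neg at hc; exact h2 (hsupp _ hc)
    rw [hnj, add_assoc] at hnk
    have hcast : ((j + (l - 1) : ℕ) : ZMod N) = ((k : ℕ) : ZMod N) := by
      push_cast
      exact add_left_cancel hnk
    have hmod : (j + (l - 1)) % N = k % N := by
      have := congrArg ZMod.val hcast
      rwa [ZMod.val_natCast, ZMod.val_natCast] at this
    have hlt1 : j + (l - 1) < N := by omega
    have hlt2 : k < N := by omega
    rw [Nat.mod_eq_of_lt hlt1, Nat.mod_eq_of_lt hlt2] at hmod
    have hj0 : j = 0 := by omega
    rw [hnj, hj0]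
    simp
  · rintro rfl
    exact mul_ne_zero ha (by simpa using hb)
end

section
/- Let x ∈ ℂ^N have all components nonzero, and let W = {w_1, ..., w_R} be N-periodic windows with l(w_r) ≤ N/2 for all r, Σ_{r=1}^R |β_r(m)|² ≠ 0 for all 0 ≤ m ≤ N−1, and gcd(l(w_1)−1, ..., l(w_R)−1, N) = 1. Then x can be recovered up to a global phase from the magnitude measurements |X_{w_r}(m,k)| (1 ≤ r ≤ R, 0 ≤ m, k ≤ N−1) of its multiple-window STFT with L = 1. -/
/-!
For fixed `m`, the squared magnitudes `k ↦ |X_w(m,k)|²` are the DFT of the autocorrelation of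
`n ↦ x n * w (m - n)`. Since the DFT is injective, the measurements determine, for every lag `p`,
the convolution of `n ↦ x n * conj (x (n - p))` with `v ↦ w v * conj (w (v + p))`, i.e. the
pointwise product of their DFTs. At `p = 0` the DFTs of the second factors are `N β_r`, which
never vanish simultaneously; at `p = l_r - 1` the second factor is supported at the single point
`a_r` because `l_r ≤ N / 2`. Either way `n ↦ x n * conj (x (n - p))` is recovered, so `y / x` is
`(l_r - 1)`-periodic for every `r`, hence `1`-periodic by the gcd condition: a constant, of
modulus one by the case `p = 0`.
-/

open Complex Finset ZMod
open scoped ComplexConjugate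

section Fourier

variable {N : ℕ} [NeZero N]

lemma exp_neg_two_pi_I_mul_val (k n : ZMod N) :
    exp (-(2 * Real.pi * I * k.val * n.val) / N) = stdAddChar (-(n * k)) := by
  have hcast : (((-(n.val * k.val : ℕ) : ℤ)) : ZMod N) = -(n * k) := by
    push_cast [natCast_zmod_val]; rfl
  rw [← hcast, stdAddChar_coe]
  push_cast
  ring_nf

lemma stft_one_val (z w : ZMod N → ℂ) (m k : ZMod N) :
    stft 1 z w m.val k.val = (N : ℂ)⁻¹ * 𝓕 (fun n => z n * w (m - n)) k := by
  simp only [stft, dft_apply, one_mul, natCast_zmod_val, exp_neg_two_pi_I_mul_val, smul_eq_mul]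
  congr 1
  exact sum_congr rfl fun n _ => mul_comm _ _

lemma dftSq_val (u : ZMod N → ℂ) (k : ZMod N) :
    dftSq u k.val = (N : ℂ)⁻¹ * 𝓕 (fun n => u n * conj (u n)) k := by
  simp only [dftSq, dft_apply, exp_neg_two_pi_I_mul_val, smul_eq_mul, mul_conj']
  congr 1
  refine sum_congr rfl fun n _ => ?_
  push_cast
  ring

lemma dft_conv (f g : ZMod N → ℂ) (k : ZMod N) :
    𝓕 (fun m => ∑ n, f n * g (m - n)) k = 𝓕 f k * 𝓕 g k := by
  rw [dft_apply, dft_apply, dft_apply, Finset.sum_mul_sum]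
  simp only [smul_eq_mul, mul_sum]
  rw [sum_comm]
  refine sum_congr rfl fun n _ => ?_
  rw [← Equiv.sum_comp (Equiv.addRight n)]
  refine sum_congr rfl fun v _ => ?_
  simp only [Equiv.coe_addRight, add_sub_cancel_right, add_mul, neg_add, AddChar.map_add_eq_mul]
  ring

lemma dft_conj_comp_neg (F : ZMod N → ℂ) (k : ZMod N) :
    𝓕 (fun t => conj (F (-t))) k = conj (𝓕 F k) := by
  rw [dft_comp_neg (fun t => conj (F t))]
  simp only [dft_apply, smul_eq_mul, map_sum, map_mul, ← AddChar.map_neg_eq_conj, mul_neg,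
    neg_neg]

lemma dft_autocorr (F : ZMod N → ℂ) (k : ZMod N) :
    𝓕 (fun p => ∑ n, F n * conj (F (n - p))) k = ‖𝓕 F k‖ ^ 2 := by
  have h := dft_conv F (fun t => conj (F (-t))) k
  simp only [neg_sub] at h
  rw [h, dft_conj_comp_neg, mul_conj']

lemma autocorr_eq_of_norm_dft_eq {F G : ZMod N → ℂ} (h : ∀ k, ‖𝓕 F k‖ = ‖𝓕 G k‖) :
    (fun p => ∑ n, F n * conj (F (n - p))) = fun p => ∑ n, G n * conj (G (n - p)) :=
  dft.injective <| funext fun k => by rw [dft_autocorr, dft_autocorr, h]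

lemma lag_conv_eq_of_norm_dft_eq {x y w : ZMod N → ℂ}
    (h : ∀ m k, ‖𝓕 (fun n => y n * w (m - n)) k‖ = ‖𝓕 (fun n => x n * w (m - n)) k‖)
    (p m : ZMod N) :
    ∑ n, y n * conj (y (n - p)) * (w (m - n) * conj (w (m - n + p))) =
      ∑ n, x n * conj (x (n - p)) * (w (m - n) * conj (w (m - n + p))) := by
  have hm := congrFun (autocorr_eq_of_norm_dft_eq (h m)) p
  convert hm using 2 with n <;> rw [map_mul, sub_sub_eq_add_sub, add_sub_right_comm] <;> ring

lemma eq_of_forall_conv_eq {ι : Type*} {f f' : ZMod N → ℂ} {g : ι → ZMod N → ℂ}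
    (hg : ∀ k, ∃ i, 𝓕 (g i) k ≠ 0)
    (h : ∀ i m, ∑ n, f n * g i (m - n) = ∑ n, f' n * g i (m - n)) : f = f' := by
  refine dft.injective <| funext fun k => ?_
  obtain ⟨i, hi⟩ := hg k
  have hk := congrFun (congrArg 𝓕 (funext (h i))) k
  rw [dft_conv, dft_conv] at hk
  exact mul_right_cancel₀ hi hk

lemma dft_ne_zero_of_forall_ne_eq_zero {g : ZMod N → ℂ} {c : ZMod N} (hc : g c ≠ 0)
    (hg : ∀ v ≠ c, g v = 0) (k : ZMod N) : 𝓕 g k ≠ 0 := by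
  rw [dft_apply, sum_eq_single c (fun v _ hv => by rw [hg v hv, smul_zero]) (by simp)]
  exact smul_ne_zero (by simp [stdAddChar_apply]) hc

end Fourier

lemma eq_of_apply_ne_zero_of_apply_add_ne_zero {N : ℕ} {w : ZMod N → ℂ} {a : ZMod N} {l : ℕ}
    (hl : l ≤ N / 2) (hsupp : ∀ n, (∀ j < l, n ≠ a + j) → w n = 0) {v : ZMod N}
    (hv : w v ≠ 0) (hvl : w (v + (l - 1 : ℕ)) ≠ 0) : v = a := by
  have mem_window {n : ZMod N} (hn : w n ≠ 0) : ∃ j < l, n = a + j := by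
    by_contra! h
    exact hn (hsupp n h)
  obtain ⟨j, hj, rfl⟩ := mem_window hv
  obtain ⟨j', hj', hj'eq⟩ := mem_window hvl
  have hcast : ((j + (l - 1) : ℕ) : ZMod N) = j' := by
    push_cast
    linear_combination hj'eq
  rw [ZMod.natCast_eq_natCast_iff', Nat.mod_eq_of_lt (by omega), Nat.mod_eq_of_lt (by omega)]
    at hcast
  obtain rfl : j = 0 := by omega
  simp

lemma dft_mul_conj_shift_ne_zero {N : ℕ} [NeZero N] {w : ZMod N → ℂ} {a : ZMod N} {l : ℕ}
    (hl : l ≤ N / 2) (hsupp : ∀ n, (∀ j < l, n ≠ a + j) → w n = 0)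
    (ha : w a ≠ 0) (hb : w (a + (l - 1 : ℕ)) ≠ 0) (k : ZMod N) :
    𝓕 (fun v => w v * conj (w (v + (l - 1 : ℕ)))) k ≠ 0 := by
  refine dft_ne_zero_of_forall_ne_eq_zero (g := fun v => w v * conj (w (v + (l - 1 : ℕ)))) (c := a)
    (mul_ne_zero ha ((map_ne_zero (starRingEnd ℂ)).2 hb)) (fun v hv => ?_) k
  by_contra h
  obtain ⟨hv0, hvl⟩ := mul_ne_zero_iff.1 h
  exact hv <| eq_of_apply_ne_zero_of_apply_add_ne_zero hl hsupp hv0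
    ((map_ne_zero (starRingEnd ℂ)).1 hvl)

section Periodic

open Function

lemma Function.Periodic.natCast_gcd {α R : Type*} [CommRing R] {f : R → α} {a b : ℕ}
    (ha : Periodic f a) (hb : Periodic f b) : Periodic f (Nat.gcd a b : R) := by
  have h : ((Nat.gcd a b : ℕ) : R) = (Nat.gcdA a b : R) * a + (Nat.gcdB a b : R) * b := by
    have := congrArg (Int.cast : ℤ → R) (Nat.gcd_eq_gcd_ab a b)
    push_cast at this
    linear_combination this
  rw [h]
  exact (ha.int_mul _).add_period (hb.int_mul _)

lemma Function.Periodic.natCast_finset_gcd {ι α R : Type*} [CommRing R] {f : R → α}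
    {s : Finset ι} {d : ι → ℕ} (h : ∀ i ∈ s, Periodic f (d i)) :
    Periodic f ((s.gcd d : ℕ) : R) := by
  classical
  induction s using Finset.induction_on with
  | empty => simp [Periodic]
  | insert i s _ ih =>
    rw [Finset.gcd_insert]
    exact (h i (mem_insert_self i s)).natCast_gcd (ih fun j hj => h j (mem_insert_of_mem hj))

lemma periodic_div_of_mul_conj_sub_eq {G : Type*} [AddGroup G] {x y : G → ℂ} {d : G}
    (hx : ∀ n, x n ≠ 0) (hnorm : ∀ n, y n * conj (y n) = x n * conj (x n))
    (hd : ∀ n, y n * conj (y (n - d)) = x n * conj (x (n - d))) : Periodic (y / x) d := by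
  intro n
  have hnd := hd (n + d)
  rw [add_sub_cancel_right] at hnd
  rw [Pi.div_apply, Pi.div_apply, div_eq_div_iff (hx _) (hx _)]
  -- after multiplying by `conj (x n)`, `hnorm n` trades `x n * conj (x n)` for `y n * conj (y n)`
  refine mul_right_cancel₀ ((map_ne_zero (starRingEnd ℂ)).2 (hx n)) ?_
  linear_combination y n * hnd - y (n + d) * hnorm n

lemma exists_eq_exp_mul_of_periodic_one {N : ℕ} [NeZero N] {x y : ZMod N → ℂ}
    (hx : ∀ n, x n ≠ 0) (hnorm : ∀ n, y n * conj (y n) = x n * conj (x n))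
    (h1 : Periodic (y / x) 1) : ∃ θ : ℝ, y = fun n => exp (I * θ) * x n := by
  set c := y 0 / x 0
  have hc : ‖c‖ = 1 := by
    have h0 := hnorm 0
    rw [mul_conj', mul_conj'] at h0
    have : ‖y 0‖ = ‖x 0‖ :=
      (pow_left_inj₀ (norm_nonneg _) (norm_nonneg _) two_ne_zero).1 (by exact_mod_cast h0)
    rw [norm_div, this, div_self (norm_ne_zero_iff.2 (hx 0))]
  refine ⟨c.arg, funext fun n => ?_⟩
  have hn : (y / x) n = c := by simpa [natCast_zmod_val] using h1.nsmul_eq n.val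
  rw [mul_comm I, ← one_mul (exp _), ← ofReal_one, ← hc, norm_mul_exp_arg_mul_I, ← hn,
    Pi.div_apply, div_mul_cancel₀ _ (hx n)]

end Periodic

theorem stmt12_general (N R : ℕ) [NeZero N]
    (w : Fin R → ZMod N → ℂ) (a : Fin R → ZMod N) (l : Fin R → ℕ)
    (hlN : ∀ r, l r ≤ N / 2)
    (ha : ∀ r, w r (a r) ≠ 0) (hb : ∀ r, w r (a r + ((l r - 1 : ℕ) : ZMod N)) ≠ 0)
    (hsupp : ∀ r, ∀ n : ZMod N, (∀ j < l r, n ≠ a r + (j : ZMod N)) → w r n = 0)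
    (hbeta : ∀ m < N, ∑ r : Fin R, ‖dftSq (w r) m‖ ^ 2 ≠ 0)
    (hgcd : Nat.gcd (Finset.univ.gcd fun r : Fin R => l r - 1) N = 1)
    (x : ZMod N → ℂ) (hx : ∀ n, x n ≠ 0) :
    ∀ y : ZMod N → ℂ,
      (∀ r : Fin R, ∀ m < N, ∀ k < N,
        ‖stft 1 y (w r) m k‖ = ‖stft 1 x (w r) m k‖) →
      ∃ θ : ℝ, y = fun n => Complex.exp (Complex.I * θ) * x n := by
  intro y hmeas
  have hlag (r : Fin R) := lag_conv_eq_of_norm_dft_eq (x := x) (y := y) (w := w r) fun m k => by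
    simpa [stft_one_val, norm_mul, NeZero.ne N] using hmeas r m.val m.val_lt k.val k.val_lt
  have hbeta_dft (k : ZMod N) : ∃ r, 𝓕 (fun v => w r v * conj (w r (v + 0))) k ≠ 0 := by
    obtain ⟨r, -, hr⟩ := exists_ne_zero_of_sum_ne_zero (hbeta k.val k.val_lt)
    exact ⟨r, by simpa [dftSq_val, NeZero.ne N] using hr⟩
  have hnorm (n : ZMod N) : y n * conj (y n) = x n * conj (x n) := by
    simpa using congrFun (eq_of_forall_conv_eq hbeta_dft fun r => hlag r 0) n
  have hshift (r : Fin R) (n : ZMod N) :=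
    congrFun (eq_of_forall_conv_eq
      (g := fun (_ : Unit) v => w r v * conj (w r (v + (l r - 1 : ℕ))))
      (fun k => ⟨(), dft_mul_conj_shift_ne_zero (hlN r) (hsupp r) (ha r) (hb r) k⟩)
      fun _ => hlag r _) n
  have hperiod (r : Fin R) := periodic_div_of_mul_conj_sub_eq hx hnorm (hshift r)
  have hperiodN : Function.Periodic (y / x) (N : ZMod N) := by simp [Function.Periodic]
  have hperiod_one : Function.Periodic (y / x) 1 := by
    simpa [hgcd] using
      (Function.Periodic.natCast_finset_gcd (s := univ) fun r _ => hperiod r).natCast_gcd hperiodN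
  exact exists_eq_exp_mul_of_periodic_one hx hnorm hperiod_one

/-- If `x` has all components nonzero, each window `w_r` has supporting length
`l_r ≤ N/2` (support exactly `[a_r, a_r + l_r - 1] + Nℤ`), `∑_r |β_r(m)|² ≠ 0` for all
`m`, and `gcd(l_1 - 1, …, l_R - 1, N) = 1`, then `x` is determined up to a global phase
by the magnitudes of its multiple-window STFT with `L = 1`. -/
theorem stmt12 (N R : ℕ) [NeZero N] (hR : 0 < R)
    (w : Fin R → ZMod N → ℂ) (a : Fin R → ZMod N) (l : Fin R → ℕ)
    (hl1 : ∀ r, 1 ≤ l r) (hlN : ∀ r, l r ≤ N / 2)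
    (ha : ∀ r, w r (a r) ≠ 0) (hb : ∀ r, w r (a r + ((l r - 1 : ℕ) : ZMod N)) ≠ 0)
    (hsupp : ∀ r, ∀ n : ZMod N, (∀ j < l r, n ≠ a r + (j : ZMod N)) → w r n = 0)
    (hbeta : ∀ m < N, ∑ r : Fin R, ‖dftSq (w r) m‖ ^ 2 ≠ 0)
    (hgcd : Nat.gcd (Finset.univ.gcd fun r : Fin R => l r - 1) N = 1)
    (x : ZMod N → ℂ) (hx : ∀ n, x n ≠ 0) :
    ∀ y : ZMod N → ℂ,
      (∀ r : Fin R, ∀ m < N, ∀ k < N,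
        ‖stft 1 y (w r) m k‖ = ‖stft 1 x (w r) m k‖) →
      ∃ θ : ℝ, y = fun n => Complex.exp (Complex.I * θ) * x n :=
  stmt12_general N R w a l hlN ha hb hsupp hbeta hgcd x hx
end

section
/- Let W = {w_1, ..., w_R} be N-periodic windows with l(w_r) ≤ N/2 for all r, such that the R × N matrix (|w_r(n)|²)_{1≤r≤R, 0≤n≤N−1} has rank N. Then any x ∈ ℂ^N for which G̃(x, W, N) is connected can be recovered up to a global phase from the magnitudes |X_{w_r}(0, k)| (1 ≤ r ≤ R, 0 ≤ k ≤ N−1). -/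
/-!
At time index `0` the transform `k ↦ X_{w_r}(0, k)` is the discrete Fourier transform of
`x · w_r(-·)`, so its modulus determines the autocorrelation of that product (Wiener–Khinchin). At
shift `0` the autocorrelations are the `R` numbers `∑ₙ |x n|² |w_r(-n)|²`, and the rank condition
recovers every `|x n|`. Because the support of `w_r` is an interval of length `l_r ≤ N/2`, the
autocorrelation at shift `l_r - 1` consists of the single term coupling the two endpoints, which
fixes `x(-a_r) · conj x(-a_r - (l_r - 1))`. With the moduli known, this pins the ratio of the
phases of `x` at the two endpoints, i.e. along each edge of `G̃`; connectedness spreads one global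
phase over the whole support.
-/

open scoped ComplexConjugate
open Finset ZMod

lemma Matrix.mulVec_injective_of_rank_eq_card {m n K : Type*} [Field K] [Fintype n]
    {A : Matrix m n K} (h : A.rank = Fintype.card n) : Function.Injective A.mulVec := by
  have hker : LinearMap.ker A.mulVecLin = ⊥ := by
    have := LinearMap.finrank_range_add_finrank_ker A.mulVecLin
    rw [← Matrix.rank, h, Module.finrank_fintype_fun_eq_card] at this
    exact Submodule.finrank_eq_zero.mp (by omega)
  exact LinearMap.ker_eq_bot.mp hker

lemma SimpleGraph.Preconnected.eq_of_forall_adj {V β : Type*} {G : SimpleGraph V}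
    (hG : G.Preconnected) {f : V → β} (hf : ∀ u v, G.Adj u v → f u = f v) (u v : V) :
    f u = f v := by
  obtain ⟨p⟩ := hG u v
  induction p with
  | nil => rfl
  | cons huv _ ih => exact (hf _ _ huv).trans ih

lemma div_eq_div_of_mul_conj_eq {p q p' q' : ℂ} (hp : p ≠ 0) (hq : q ≠ 0)
    (h : p' * conj q' = p * conj q) (hnorm : ‖q'‖ = ‖q‖) : p' / p = q' / q := by
  have hnormSq : (Complex.normSq q' : ℂ) = Complex.normSq q := by
    simp only [Complex.normSq_eq_norm_sq, hnorm]
  rw [div_eq_div_iff hp hq]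
  refine mul_right_cancel₀ (Complex.ofReal_ne_zero.mpr (Complex.normSq_pos.mpr hq).ne') ?_
  calc p' * q * Complex.normSq q
      = (p' * conj q') * (q' * q) := by rw [← hnormSq, ← Complex.mul_conj]; ring
    _ = (p * conj q) * (q' * q) := by rw [h]
    _ = q' * p * Complex.normSq q := by rw [← Complex.mul_conj]; ring

lemma exists_eq_exp_mul_of_eq_const_mul {ι : Type*} {x y : ι → ℂ} (hnorm : ∀ n, ‖y n‖ = ‖x n‖)
    {c : ℂ} (hc : ∀ n, x n ≠ 0 → y n = c * x n) {n₀ : ι} (hn₀ : x n₀ ≠ 0) :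
    ∃ θ : ℝ, y = fun n => Complex.exp (Complex.I * θ) * x n := by
  have hc1 : ‖c‖ = 1 := by
    have := hnorm n₀
    rwa [hc n₀ hn₀, norm_mul, mul_eq_right₀ (norm_ne_zero_iff.mpr hn₀)] at this
  refine ⟨c.arg, funext fun n => ?_⟩
  have hexp : Complex.exp (Complex.I * c.arg) = c := by
    simpa [hc1, mul_comm] using Complex.norm_mul_exp_arg_mul_I c
  rw [hexp]
  by_cases hxn : x n = 0
  · rw [hxn, mul_zero, ← norm_eq_zero, hnorm, hxn, norm_zero]
  · exact hc n hxn

section Autocorrelation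

variable {N : ℕ} [NeZero N]

def autocorrelation (f : ZMod N → ℂ) (s : ZMod N) : ℂ :=
  ∑ n, f n * conj (f (n - s))

lemma dft_autocorrelation (f : ZMod N → ℂ) (k : ZMod N) :
    𝓕 (autocorrelation f) k = 𝓕 f k * conj (𝓕 f k) := by
  simp only [dft_apply, autocorrelation, smul_eq_mul, map_sum, map_mul, mul_sum, sum_mul]
  rw [sum_comm]
  conv_rhs => rw [sum_comm]
  refine sum_congr rfl fun n _ => ?_
  rw [← (Equiv.subLeft n).sum_comp]
  refine sum_congr rfl fun m _ => ?_
  have hchar : (stdAddChar (-((n - m) * k)) : ℂ) =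
      stdAddChar (-(n * k)) * conj (stdAddChar (-(m * k)) : ℂ) := by
    rw [← AddChar.map_neg_eq_conj, ← AddChar.map_add_eq_mul]
    ring_nf
  simp only [Equiv.subLeft_apply, sub_sub_cancel, hchar]
  ring

lemma autocorrelation_eq_of_norm_dft_eq {f g : ZMod N → ℂ} (h : ∀ k, ‖𝓕 f k‖ = ‖𝓕 g k‖) :
    autocorrelation f = autocorrelation g :=
  dft.injective <| funext fun k => by
    simp only [dft_autocorrelation, Complex.mul_conj, Complex.normSq_eq_norm_sq, h]

lemma autocorrelation_zero (f : ZMod N → ℂ) :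
    autocorrelation f 0 = ((∑ n, ‖f n‖ ^ 2 : ℝ) : ℂ) := by
  simp [autocorrelation, Complex.mul_conj, Complex.normSq_eq_norm_sq]

lemma autocorrelation_eq_single {g : ZMod N → ℂ} {b : ZMod N} {l : ℕ} (hl : 2 * l ≤ N)
    (hg : ∀ n, (∀ j < l, n ≠ b - j) → g n = 0) :
    autocorrelation g ((l - 1 : ℕ) : ZMod N) = g b * conj (g (b - ((l - 1 : ℕ) : ZMod N))) := by
  refine sum_eq_single b (fun n _ hn => ?_) (by simp)
  by_contra hne
  obtain ⟨j, hj, rfl⟩ : ∃ j < l, n = b - j := by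
    by_contra! h
    exact left_ne_zero_of_mul hne (hg n h)
  obtain ⟨j', hj', hj'eq⟩ : ∃ j' < l, b - j - ((l - 1 : ℕ) : ZMod N) = b - j' := by
    by_contra! h
    exact right_ne_zero_of_mul hne (by rw [hg _ h, map_zero])
  -- `j + (l - 1) < N`, so the congruence `j' ≡ j + (l - 1)` is an equality of naturals
  have hcast : ((j' : ℕ) : ZMod N) = ((j + (l - 1) : ℕ) : ZMod N) := by
    push_cast
    linear_combination hj'eq
  rw [ZMod.natCast_eq_natCast_iff', Nat.mod_eq_of_lt (by omega), Nat.mod_eq_of_lt (by omega)]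
    at hcast
  exact hn (by rw [show j = 0 by omega, Nat.cast_zero, sub_zero])

end Autocorrelation

section Windowed

variable {N : ℕ} [NeZero N]

lemma stft_zero_eq_dft (L : ℕ) (x w : ZMod N → ℂ) (k : ℕ) :
    stft L x w 0 k = (N : ℂ)⁻¹ * 𝓕 (fun n => x n * w (-n)) k := by
  simp only [stft, dft_apply, smul_eq_mul, mul_zero, Nat.cast_zero, zero_sub]
  congr 1
  refine sum_congr rfl fun n _ => ?_
  have hexp : Complex.exp (-(2 * Real.pi * Complex.I * k * n.val) / N) =
      stdAddChar (-(n * (k : ZMod N))) := by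
    rw [show -(n * (k : ZMod N)) = ((-(n.val * k : ℕ) : ℤ) : ZMod N) by
      push_cast [ZMod.natCast_zmod_val]; ring, ZMod.stdAddChar_coe]
    congr 1
    push_cast
    ring
  rw [hexp, mul_comm]

lemma norm_dft_eq_of_norm_stft_eq {L : ℕ} {x y w : ZMod N → ℂ}
    (h : ∀ k < N, ‖stft L y w 0 k‖ = ‖stft L x w 0 k‖) (k : ZMod N) :
    ‖𝓕 (fun n => y n * w (-n)) k‖ = ‖𝓕 (fun n => x n * w (-n)) k‖ := by
  have hk := h k.val k.val_lt
  simp only [stft_zero_eq_dft, ZMod.natCast_zmod_val, norm_mul] at hk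
  exact mul_left_cancel₀ (by simp [NeZero.ne N]) hk

lemma norm_eq_of_autocorrelation_zero_eq {ι : Type*} {w : ι → ZMod N → ℂ}
    (hrank : (Matrix.of fun r n => ‖w r n‖ ^ 2 : Matrix ι (ZMod N) ℝ).rank = N)
    {x y : ZMod N → ℂ}
    (h : ∀ r, autocorrelation (fun n => y n * w r (-n)) 0 =
      autocorrelation (fun n => x n * w r (-n)) 0) (n : ZMod N) :
    ‖y n‖ = ‖x n‖ := by
  have hsq : (fun n => ‖y (-n)‖ ^ 2) = fun n => ‖x (-n)‖ ^ 2 := by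
    refine Matrix.mulVec_injective_of_rank_eq_card (hrank.trans (ZMod.card N).symm)
      (funext fun r => ?_)
    have hr := h r
    simp only [autocorrelation_zero, Complex.ofReal_inj] at hr
    have hneg : ∀ z : ZMod N → ℂ, ∑ n, ‖w r n‖ ^ 2 * ‖z (-n)‖ ^ 2 = ∑ n, ‖z n * w r (-n)‖ ^ 2 :=
      fun z => Fintype.sum_equiv (Equiv.neg _) _ _ fun n => by simp [mul_pow, mul_comm]
    simp only [Matrix.mulVec, dotProduct, Matrix.of_apply, hneg, hr]
  simpa using (pow_left_inj₀ (norm_nonneg _) (norm_nonneg _) two_ne_zero).mp (congrFun hsq (-n))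

lemma mul_conj_eq_of_autocorrelation_eq {x y w : ZMod N → ℂ} {a : ZMod N} {l : ℕ}
    (hl : 2 * l ≤ N) (ha : w a ≠ 0) (hb : w (a + ((l - 1 : ℕ) : ZMod N)) ≠ 0)
    (hsupp : ∀ n, (∀ j < l, n ≠ a + j) → w n = 0)
    (h : autocorrelation (fun n => y n * w (-n)) ((l - 1 : ℕ) : ZMod N) =
      autocorrelation (fun n => x n * w (-n)) ((l - 1 : ℕ) : ZMod N)) :
    y (-a) * conj (y (-a - ((l - 1 : ℕ) : ZMod N))) =
      x (-a) * conj (x (-a - ((l - 1 : ℕ) : ZMod N))) := by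
  have hwindow : ∀ z : ZMod N → ℂ, ∀ n, (∀ j < l, n ≠ -a - j) → z n * w (-n) = 0 :=
    fun z n hn => by
      rw [hsupp (-n) fun j hj heq => hn j hj (by linear_combination -heq), mul_zero]
  have hend : -(-a - ((l - 1 : ℕ) : ZMod N)) = a + ((l - 1 : ℕ) : ZMod N) := by ring
  rw [autocorrelation_eq_single hl (hwindow y), autocorrelation_eq_single hl (hwindow x), hend,
    neg_neg] at h
  simp only [map_mul] at h
  refine mul_left_cancel₀ (mul_ne_zero ha ((map_ne_zero (starRingEnd ℂ)).mpr hb)) ?_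
  linear_combination h

end Windowed

theorem stmt13_general (N R : ℕ) [NeZero N]
    (w : Fin R → ZMod N → ℂ) (a : Fin R → ZMod N) (l : Fin R → ℕ)
    (hlN : ∀ r, l r ≤ N / 2)
    (ha : ∀ r, w r (a r) ≠ 0) (hb : ∀ r, w r (a r + ((l r - 1 : ℕ) : ZMod N)) ≠ 0)
    (hsupp : ∀ r, ∀ n : ZMod N, (∀ j < l r, n ≠ a r + (j : ZMod N)) → w r n = 0)
    (hrank : Matrix.rank (Matrix.of fun (r : Fin R) (n : ZMod N) => (‖w r n‖ ^ 2 : ℝ)) = N)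
    (x : ZMod N → ℂ)
    (hconn : (SimpleGraph.fromRel (fun n n' : {n : ZMod N // x n ≠ 0} =>
      ∃ r : Fin R,
        (n.1 = -a r ∨ n.1 = -a r - ((l r - 1 : ℕ) : ZMod N)) ∧
        (n'.1 = -a r ∨ n'.1 = -a r - ((l r - 1 : ℕ) : ZMod N)))).Connected) :
    ∀ y : ZMod N → ℂ,
      (∀ r : Fin R, ∀ k < N, ‖stft N y (w r) 0 k‖ = ‖stft N x (w r) 0 k‖) →
      ∃ θ : ℝ, y = fun n => Complex.exp (Complex.I * θ) * x n := by
  intro y hy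
  have hac (r : Fin R) := autocorrelation_eq_of_norm_dft_eq (norm_dft_eq_of_norm_stft_eq (hy r))
  have hnorm := norm_eq_of_autocorrelation_zero_eq hrank fun r => congrFun (hac r) 0
  have hedge (r : Fin R) (u v : {n : ZMod N // x n ≠ 0}) (hu : u.1 = -a r)
      (hv : v.1 = -a r - ((l r - 1 : ℕ) : ZMod N)) : y u / x u = y v / x v := by
    have hphase := mul_conj_eq_of_autocorrelation_eq (by have := hlN r; omega) (ha r) (hb r)
      (hsupp r) (congrFun (hac r) _)
    rw [← hv, ← hu] at hphase
    exact div_eq_div_of_mul_conj_eq u.2 v.2 hphase (hnorm v)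
  have hratio := hconn.preconnected.eq_of_forall_adj (f := fun v => y v / x v) <| by
    rintro u v ⟨hne, ⟨r, hu, hv⟩ | ⟨r, hv, hu⟩⟩ <;> rcases hu with hu | hu <;>
      rcases hv with hv | hv
    all_goals first
      | exact absurd (Subtype.ext (hu.trans hv.symm)) hne
      | exact hedge r u v hu hv
      | exact (hedge r v u hv hu).symm
  obtain ⟨v₀⟩ := hconn.nonempty
  refine exists_eq_exp_mul_of_eq_const_mul hnorm (c := y v₀ / x v₀) (fun n hn => ?_) v₀.2
  rw [← hratio ⟨n, hn⟩ v₀, div_mul_cancel₀ _ hn]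

/-- Phase retrieval with masks (`L = N`): if each window `w_r` has supporting length
`l_r ≤ N/2` (support exactly `[a_r, a_r + l_r - 1] + Nℤ`), and the `R × N` matrix
`(|w_r(n)|²)` has rank `N`, then any `x` with `G̃(x, W, N)` connected is determined
up to a global phase by the magnitudes `|X_{w_r}(0, k)|`. -/
theorem stmt13 (N R : ℕ) [NeZero N] (hR : N ≤ R)
    (w : Fin R → ZMod N → ℂ) (a : Fin R → ZMod N) (l : Fin R → ℕ)
    (hl1 : ∀ r, 1 ≤ l r) (hlN : ∀ r, l r ≤ N / 2)
    (ha : ∀ r, w r (a r) ≠ 0) (hb : ∀ r, w r (a r + ((l r - 1 : ℕ) : ZMod N)) ≠ 0)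
    (hsupp : ∀ r, ∀ n : ZMod N, (∀ j < l r, n ≠ a r + (j : ZMod N)) → w r n = 0)
    (hrank : Matrix.rank (Matrix.of fun (r : Fin R) (n : ZMod N) => (‖w r n‖ ^ 2 : ℝ)) = N)
    (x : ZMod N → ℂ)
    (hconn : (SimpleGraph.fromRel (fun n n' : {n : ZMod N // x n ≠ 0} =>
      ∃ r : Fin R,
        (n.1 = -a r ∨ n.1 = -a r - ((l r - 1 : ℕ) : ZMod N)) ∧
        (n'.1 = -a r ∨ n'.1 = -a r - ((l r - 1 : ℕ) : ZMod N)))).Connected) :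
    ∀ y : ZMod N → ℂ,
      (∀ r : Fin R, ∀ k < N, ‖stft N y (w r) 0 k‖ = ‖stft N x (w r) 0 k‖) →
      ∃ θ : ℝ, y = fun n => Complex.exp (Complex.I * θ) * x n :=
  stmt13_general N R w a l hlN ha hb hsupp hrank x hconn
end
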